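/- Let Y, U ∈ V be orthonormal (⟨Y,Y⟩ = ⟨U,U⟩ = 1, ⟨Y,U⟩ = 0), and let W ∈ V satisfy ⟨W,Y⟩ = 0 (as holds for W = R(U,Y)Y by the symmetries of a Riemannian curvature tensor). Set A = ⟨W,X⟩ and B = ⟨W,U⟩. Then the flag curvature quotient satisfies g_Y(W,U) / (g_Y(Y,Y)·g_Y(U,U) − g_Y(Y,U)²) = (1 − ⟨Y,X⟩)²·{ B(1 − ⟨Y,X⟩)(1 − 2⟨Y,X⟩) + 3A⟨U,X⟩ } / { (1 − ⟨Y,X⟩)(1 − 2⟨Y,X⟩) + 2⟨U,X⟩² }. -/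

import Mathlib

/-!
Along a line `y + t v` the Matsumoto metric is `F = ‖y‖² / (‖y‖ - ⟪X, y⟫)`, so the two
directional derivatives defining `g_Y` follow from the one-variable chain rule. For a unit
vector `Y` and `a = ⟪X, Y⟫` this gives the familiar `(α, β)`-metric shape
`(1 - a)⁴ g_Y(P, Q) = (1 - a)(1 - 2a)⟪P, Q⟫ + 3⟪X, P⟫⟪X, Q⟫`
`+ (1 - 4a)(⟪X, P⟫⟪Y, Q⟫ + ⟪Y, P⟫⟪X, Q⟫) + a(4a - 1)⟪Y, P⟫⟪Y, Q⟫`,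
and on an orthonormal pair `Y, U` the flag quotient becomes a rational identity in `a` and
`⟪X, U⟫`; `‖X‖ < 1/2` keeps its denominator `(1 - a)(1 - 2a) + 2⟪X, U⟫²` positive.
-/

open scoped RealInnerProductSpace

/-- The Matsumoto metric `F(y) = ⟨y,y⟩ / (√⟨y,y⟩ − ⟨X,y⟩)` associated to the
vector `X` of an inner product space. -/
noncomputable def matsumotoF {V : Type*} [NormedAddCommGroup V] [InnerProductSpace ℝ V]
    (X y : V) : ℝ :=
  ⟪y, y⟫ / (Real.sqrt ⟪y, y⟫ - ⟪X, y⟫)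

/-- The fundamental tensor of the Matsumoto metric:
`g_Y(U,W) = (1/2)·∂²/∂s∂t [F²(Y + sU + tW)]` at `s = t = 0`. -/
noncomputable def matsumotoG {V : Type*} [NormedAddCommGroup V] [InnerProductSpace ℝ V]
    (X Y U W : V) : ℝ :=
  (1 / 2) * deriv (fun s : ℝ =>
    deriv (fun t : ℝ => (matsumotoF X (Y + s • U + t • W)) ^ 2) 0) 0

section Matsumoto

variable {V : Type*} [NormedAddCommGroup V] [InnerProductSpace ℝ V]

lemma matsumotoF_eq (X y : V) : matsumotoF X y = ‖y‖ ^ 2 / (‖y‖ - ⟪X, y⟫) := by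
  rw [matsumotoF, real_inner_self_eq_norm_sq, Real.sqrt_sq (norm_nonneg y)]

lemma real_inner_lt_norm_of_norm_lt_one {X y : V} (hX : ‖X‖ < 1) (hy : y ≠ 0) :
    ⟪X, y⟫ < ‖y‖ :=
  calc ⟪X, y⟫ ≤ ‖X‖ * ‖y‖ := real_inner_le_norm X y
    _ < ‖y‖ := mul_lt_of_lt_one_left (norm_pos_iff.mpr hy) hX

lemma one_sub_real_inner_pos {X Y : V} (hX : ‖X‖ < 1) (hY : ‖Y‖ = 1) : 0 < 1 - ⟪X, Y⟫ :=
  sub_pos.mpr (hY ▸ real_inner_lt_norm_of_norm_lt_one hX (norm_ne_zero_iff.mp (hY ▸ one_ne_zero)))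

lemma hasDerivAt_inner_add_smul (w y v : V) :
    HasDerivAt (fun t : ℝ => ⟪w, y + t • v⟫) ⟪w, v⟫ 0 := by
  simpa [inner_add_right, real_inner_smul_right] using
    ((hasDerivAt_id (0 : ℝ)).mul_const ⟪w, v⟫).const_add ⟪w, y⟫

lemma hasDerivAt_norm_add_smul {y : V} (hy : y ≠ 0) (v : V) :
    HasDerivAt (fun t : ℝ => ‖y + t • v‖) (⟪y, v⟫ / ‖y‖) 0 := by
  have hline : HasDerivAt (fun t : ℝ => y + t • v) v 0 := by
    simpa using ((hasDerivAt_id (0 : ℝ)).smul_const v).const_add y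
  have hsq := hline.norm_sq.sqrt (by simpa using hy)
  simp only [zero_smul, add_zero, Real.sqrt_sq (norm_nonneg _)] at hsq
  convert hsq using 1
  field_simp

noncomputable def matsumotoSqDeriv (X y v : V) : ℝ :=
  2 * ‖y‖ ^ 2 * (⟪y, v⟫ * (‖y‖ - 2 * ⟪X, y⟫) + ‖y‖ ^ 2 * ⟪X, v⟫) / (‖y‖ - ⟪X, y⟫) ^ 3

lemma hasDerivAt_matsumotoF_sq_add_smul {X y : V} (hX : ‖X‖ < 1) (hy : y ≠ 0) (v : V) :
    HasDerivAt (fun t : ℝ => matsumotoF X (y + t • v) ^ 2) (matsumotoSqDeriv X y v) 0 := by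
  have hn := hasDerivAt_norm_add_smul hy v
  have hb := hasDerivAt_inner_add_smul X y v
  have hden : ‖y‖ - ⟪X, y⟫ ≠ 0 := (sub_pos.mpr (real_inner_lt_norm_of_norm_lt_one hX hy)).ne'
  have hF := ((hn.fun_pow 2).fun_div (hn.fun_sub hb) (by simpa using hden)).fun_pow 2
  simp only [zero_smul, add_zero, Nat.cast_ofNat, Nat.reduceSub, pow_one] at hF
  simp only [matsumotoF_eq]
  refine hF.congr_deriv ?_
  unfold matsumotoSqDeriv
  field_simp
  ring

lemma hasDerivAt_matsumotoSqDeriv_add_smul {X Y : V} (hY : ‖Y‖ = 1) (ha : ⟪X, Y⟫ ≠ 1)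
    (P Q : V) :
    HasDerivAt (fun s : ℝ => matsumotoSqDeriv X (Y + s • P) Q)
      (2 * (((1 - ⟪X, Y⟫) * (1 - 2 * ⟪X, Y⟫) * ⟪P, Q⟫ + 3 * ⟪X, P⟫ * ⟪X, Q⟫
          + (1 - 4 * ⟪X, Y⟫) * (⟪X, P⟫ * ⟪Y, Q⟫ + ⟪Y, P⟫ * ⟪X, Q⟫)
          + ⟪X, Y⟫ * (4 * ⟪X, Y⟫ - 1) * ⟪Y, P⟫ * ⟪Y, Q⟫) / (1 - ⟪X, Y⟫) ^ 4)) 0 := by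
  have hY0 : Y ≠ 0 := norm_ne_zero_iff.mp (hY ▸ one_ne_zero)
  have h1 : (1 : ℝ) - ⟪X, Y⟫ ≠ 0 := sub_ne_zero.mpr (Ne.symm ha)
  have hn := hasDerivAt_norm_add_smul hY0 P
  have hb := hasDerivAt_inner_add_smul X Y P
  have hi : HasDerivAt (fun s : ℝ => ⟪Y + s • P, Q⟫) ⟪P, Q⟫ 0 := by
    simpa only [real_inner_comm Q] using hasDerivAt_inner_add_smul Q Y P
  have hden : (‖Y‖ - ⟪X, Y⟫) ^ 3 ≠ 0 := hY ▸ pow_ne_zero 3 h1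
  have hD := (((hn.fun_pow 2).const_mul 2).fun_mul
    ((hi.fun_mul (hn.fun_sub (hb.const_mul 2))).fun_add ((hn.fun_pow 2).mul_const ⟪X, Q⟫))).fun_div
    ((hn.fun_sub hb).fun_pow 3) (by simpa using hden)
  simp only [zero_smul, add_zero, hY] at hD
  unfold matsumotoSqDeriv
  refine hD.congr_deriv ?_
  field_simp
  ring

theorem matsumotoG_eq_of_norm_eq_one {X Y : V} (hX : ‖X‖ < 1) (hY : ‖Y‖ = 1) (P Q : V) :
    matsumotoG X Y P Q =
      ((1 - ⟪X, Y⟫) * (1 - 2 * ⟪X, Y⟫) * ⟪P, Q⟫ + 3 * ⟪X, P⟫ * ⟪X, Q⟫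
          + (1 - 4 * ⟪X, Y⟫) * (⟪X, P⟫ * ⟪Y, Q⟫ + ⟪Y, P⟫ * ⟪X, Q⟫)
          + ⟪X, Y⟫ * (4 * ⟪X, Y⟫ - 1) * ⟪Y, P⟫ * ⟪Y, Q⟫) / (1 - ⟪X, Y⟫) ^ 4 := by
  have hY0 : Y ≠ 0 := norm_ne_zero_iff.mp (hY ▸ one_ne_zero)
  have ha : ⟪X, Y⟫ ≠ 1 := (sub_pos.mp (one_sub_real_inner_pos hX hY)).ne
  have hnear : ∀ᶠ s : ℝ in nhds 0, Y + s • P ≠ 0 :=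
    (Continuous.continuousAt (by fun_prop)).eventually_ne (by simpa using hY0)
  have hinner : (fun s : ℝ => deriv (fun t : ℝ => matsumotoF X (Y + s • P + t • Q) ^ 2) 0)
      =ᶠ[nhds 0] fun s => matsumotoSqDeriv X (Y + s • P) Q :=
    hnear.mono fun s hs => (hasDerivAt_matsumotoF_sq_add_smul hX hs Q).deriv
  rw [matsumotoG, hinner.deriv_eq, (hasDerivAt_matsumotoSqDeriv_add_smul hY ha P Q).deriv]
  ring

theorem matsumotoG_self_self {X Y : V} (hX : ‖X‖ < 1) (hY : ‖Y‖ = 1) :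
    matsumotoG X Y Y Y = 1 / (1 - ⟪X, Y⟫) ^ 2 := by
  have h1 := (one_sub_real_inner_pos hX hY).ne'
  rw [matsumotoG_eq_of_norm_eq_one hX hY, real_inner_self_eq_norm_sq, hY]
  field_simp
  ring

theorem matsumotoG_self_of_inner_eq_zero {X Y Q : V} (hX : ‖X‖ < 1) (hY : ‖Y‖ = 1)
    (hQ : ⟪Y, Q⟫ = 0) : matsumotoG X Y Y Q = ⟪X, Q⟫ / (1 - ⟪X, Y⟫) ^ 3 := by
  have h1 := (one_sub_real_inner_pos hX hY).ne'
  rw [matsumotoG_eq_of_norm_eq_one hX hY, real_inner_self_eq_norm_sq, hY, hQ]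
  field_simp
  ring

theorem matsumotoG_of_inner_eq_zero {X Y P Q : V} (hX : ‖X‖ < 1) (hY : ‖Y‖ = 1)
    (hP : ⟪Y, P⟫ = 0) (hQ : ⟪Y, Q⟫ = 0) :
    matsumotoG X Y P Q =
      ((1 - ⟪X, Y⟫) * (1 - 2 * ⟪X, Y⟫) * ⟪P, Q⟫ + 3 * ⟪X, P⟫ * ⟪X, Q⟫) / (1 - ⟪X, Y⟫) ^ 4 := by
  rw [matsumotoG_eq_of_norm_eq_one hX hY, hP, hQ]
  ring

end Matsumoto

theorem matsumoto_flag_curvature_quotient_general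
    {V : Type*} [NormedAddCommGroup V] [InnerProductSpace ℝ V]
    (X : V) (hX : ‖X‖ < 1 / 2) (Y U W : V)
    (hY : ⟪Y, Y⟫ = 1) (hU : ⟪U, U⟫ = 1) (hYU : ⟪Y, U⟫ = 0)
    (hWY : ⟪W, Y⟫ = 0) (A B : ℝ) (hA : A = ⟪W, X⟫) (hB : B = ⟪W, U⟫) :
    matsumotoG X Y W U /
        (matsumotoG X Y Y Y * matsumotoG X Y U U - matsumotoG X Y Y U ^ 2) =
      (1 - ⟪Y, X⟫) ^ 2 *
          (B * (1 - ⟪Y, X⟫) * (1 - 2 * ⟪Y, X⟫) + 3 * A * ⟪U, X⟫) /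
        ((1 - ⟪Y, X⟫) * (1 - 2 * ⟪Y, X⟫) + 2 * ⟪U, X⟫ ^ 2) := by
  have hY1 : ‖Y‖ = 1 := by
    rwa [real_inner_self_eq_norm_sq, pow_eq_one_iff_of_nonneg (norm_nonneg Y) two_ne_zero] at hY
  have hX1 : ‖X‖ < 1 := hX.trans one_half_lt_one
  have ha : ⟪X, Y⟫ < 1 / 2 :=
    calc ⟪X, Y⟫ ≤ ‖X‖ * ‖Y‖ := real_inner_le_norm X Y
      _ < 1 / 2 := by rwa [hY1, mul_one]
  have h1 : 1 - ⟪X, Y⟫ ≠ 0 := by linarith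
  have hflag : (1 - ⟪X, Y⟫) * (1 - 2 * ⟪X, Y⟫) + 2 * ⟪X, U⟫ ^ 2 ≠ 0 := by
    nlinarith [sq_nonneg ⟪X, U⟫]
  rw [matsumotoG_self_self hX1 hY1, matsumotoG_self_of_inner_eq_zero hX1 hY1 hYU,
    matsumotoG_of_inner_eq_zero hX1 hY1 hYU hYU,
    matsumotoG_of_inner_eq_zero hX1 hY1 (by rw [real_inner_comm, hWY]) hYU,
    hU, ← hB, hA, real_inner_comm W, real_inner_comm X Y, real_inner_comm X U]
  field_simp
  ring

theorem matsumoto_flag_curvature_quotient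
    {V : Type*} [NormedAddCommGroup V] [InnerProductSpace ℝ V] [FiniteDimensional ℝ V]
    (X : V) (hX : ‖X‖ < 1 / 2) (Y U W : V)
    (hY : ⟪Y, Y⟫ = 1) (hU : ⟪U, U⟫ = 1) (hYU : ⟪Y, U⟫ = 0)
    (hWY : ⟪W, Y⟫ = 0) (A B : ℝ) (hA : A = ⟪W, X⟫) (hB : B = ⟪W, U⟫) :
    matsumotoG X Y W U /
        (matsumotoG X Y Y Y * matsumotoG X Y U U - matsumotoG X Y Y U ^ 2) =
      (1 - ⟪Y, X⟫) ^ 2 *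
          (B * (1 - ⟪Y, X⟫) * (1 - 2 * ⟪Y, X⟫) + 3 * A * ⟪U, X⟫) /
        ((1 - ⟪Y, X⟫) * (1 - 2 * ⟪Y, X⟫) + 2 * ⟪U, X⟫ ^ 2) :=
  matsumoto_flag_curvature_quotient_general X hX Y U W hY hU hYU hWY A B hA hB
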